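/- arXiv:2309.07142 — 6 statements merged into one kernel-verified Lean document; each statement's English description precedes it below -/
import Mathlib

section
/- Let k, r be positive integers with k ≤ r, and let a, b be complex numbers with |a| ≤ 1, |b| ≤ 1, a ≠ b. Let p(z) = (z−a)^k (z−b)^r. Then there exists ζ ≠ a with p'(ζ) = 0 and |a − ζ| ≤ 1. -/
theorem stmt1 (k r : ℕ) (hk : 0 < k) (hr : 0 < r) (hkr : k ≤ r) (a b : ℂ)
    (ha : ‖a‖ ≤ 1) (hb : ‖b‖ ≤ 1) (hab : a ≠ b) :
    let p : ℂ → ℂ := fun z => (z - a) ^ k * (z - b) ^ r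
    ∃ ζ : ℂ, ζ ≠ a ∧ deriv p ζ = 0 ∧ ‖a - ζ‖ ≤ 1 := by
  intro p
  have hkr0 : ((k : ℂ) + (r : ℂ)) ≠ 0 := by
    have : ((k + r : ℕ) : ℂ) ≠ 0 := Nat.cast_ne_zero.mpr (by omega)
    simpa using this
  have hk0 : (k : ℂ) ≠ 0 := Nat.cast_ne_zero.mpr hk.ne'
  set ζ : ℂ := ((k : ℂ) * b + (r : ℂ) * a) / ((k : ℂ) + (r : ℂ)) with hζ
  have key : (k : ℂ) * (ζ - b) + (r : ℂ) * (ζ - a) = 0 := by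
    rw [hζ]
    field_simp
    ring
  have hdist : a - ζ = (k : ℂ) * (a - b) / ((k : ℂ) + (r : ℂ)) := by
    rw [hζ]
    field_simp
    ring
  clear_value ζ
  clear hζ
  refine ⟨ζ, ?_, ?_, ?_⟩
  · intro h
    apply hab
    rw [h] at key
    simp at key
    rcases key with h' | h'
    · omega
    · exact sub_eq_zero.mp h'
  · have hf : HasDerivAt (fun z : ℂ => (z - a) ^ k)
        ((k : ℂ) * (ζ - a) ^ (k - 1) * 1) ζ :=
      ((hasDerivAt_id ζ).sub_const a).pow k
    have hg : HasDerivAt (fun z : ℂ => (z - b) ^ r)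
        ((r : ℂ) * (ζ - b) ^ (r - 1) * 1) ζ :=
      ((hasDerivAt_id ζ).sub_const b).pow r
    have hp : HasDerivAt p
        ((k : ℂ) * (ζ - a) ^ (k - 1) * 1 * (ζ - b) ^ r
          + (ζ - a) ^ k * ((r : ℂ) * (ζ - b) ^ (r - 1) * 1)) ζ := hf.mul hg
    rw [hp.deriv]
    obtain ⟨m, rfl⟩ : ∃ m, k = m + 1 := ⟨k - 1, (Nat.succ_pred_eq_of_pos hk).symm⟩
    obtain ⟨n, rfl⟩ : ∃ n, r = n + 1 := ⟨r - 1, (Nat.succ_pred_eq_of_pos hr).symm⟩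
    simp only [Nat.add_sub_cancel, pow_succ]
    push_cast at key ⊢
    linear_combination ((ζ - a) ^ m * (ζ - b) ^ n) * key
  · rw [hdist, norm_div, norm_mul]
    have habs : ‖a - b‖ ≤ 2 := by
      calc ‖a - b‖ ≤ ‖a‖ + ‖b‖ := by
            simpa using norm_sub_le a b
        _ ≤ 2 := by linarith
    have h2 : ‖(k : ℂ) + (r : ℂ)‖ = (k : ℝ) + (r : ℝ) := by
      rw [← Nat.cast_add, Complex.norm_natCast, Nat.cast_add]
    have h3 : ‖(k : ℂ)‖ = (k : ℝ) := Complex.norm_natCast k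
    rw [h2, h3, div_le_one (by positivity)]
    have : (k : ℝ) * ‖a - b‖ ≤ (k : ℝ) * 2 := by
      apply mul_le_mul_of_nonneg_left habs (by positivity)
    have hkr' : (k : ℝ) ≤ (r : ℝ) := Nat.cast_le.mpr hkr
    linarith
end

section
/- Let p(z) = (z−1)^n ∏_{j=1}^k (z−z_j)^{n_j} where n ≥ 1, k ≥ 1, n_j ≥ 1, the z_j are distinct, z_j ≠ 1, and |z_j| ≤ 1 for all j. Write p'(z) = m (z−1)^{n−1} ∏_{j=1}^k (z−z_j)^{n_j−1} ∏_{j=1}^k (z−w_j) with m = n + ∑_j n_j. Then ∑_{j=1}^k 1/(1 − w_j) = (1/n) ∑_{j=1}^k (n_j + n)/(1 − z_j). -/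
open Finset

/-- Algebraic factoring of the raw product-rule derivative. -/
lemma stmt5_factored (k n : ℕ) (hn : 1 ≤ n) (z : Fin k → ℂ) (nj : Fin k → ℕ)
    (hnj : ∀ j, 1 ≤ nj j) (x : ℂ) :
    (n:ℂ) * (x-1)^(n-1) * 1 * ∏ j, (x - z j) ^ (nj j)
      + (x-1)^n * ∑ j, (∏ i ∈ univ.erase j, (x - z i) ^ (nj i)) •
          ((nj j : ℂ) * (x - z j) ^ (nj j - 1) * 1)
    = (x-1)^(n-1) * (∏ j, (x - z j) ^ (nj j - 1)) *
        ((n:ℂ) * ∏ j, (x - z j)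
          + (x - 1) * ∑ j, (nj j : ℂ) * ∏ i ∈ univ.erase j, (x - z i)) := by
  have e1 : ∀ j : Fin k, (x - z j) ^ (nj j) = (x - z j) ^ (nj j - 1) * (x - z j) := by
    intro j; rw [← pow_succ, Nat.sub_add_cancel (hnj j)]
  have e2 : (x-1)^n = (x-1)^(n-1) * (x-1) := by
    rw [← pow_succ, Nat.sub_add_cancel hn]
  have eP : ∏ j, (x - z j) ^ (nj j)
      = (∏ j, (x - z j) ^ (nj j - 1)) * ∏ j, (x - z j) := by
    rw [← prod_mul_distrib]; exact prod_congr rfl fun j _ => e1 j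
  have eterm : ∀ j : Fin k, (∏ i ∈ univ.erase j, (x - z i) ^ (nj i)) * (x - z j) ^ (nj j - 1)
      = (∏ i, (x - z i) ^ (nj i - 1)) * ∏ i ∈ univ.erase j, (x - z i) := by
    intro j
    have h1 : ∏ i ∈ univ.erase j, (x - z i) ^ (nj i)
        = (∏ i ∈ univ.erase j, (x - z i) ^ (nj i - 1)) * ∏ i ∈ univ.erase j, (x - z i) := by
      rw [← prod_mul_distrib]; exact prod_congr rfl fun i _ => e1 i
    have h2 : (x - z j) ^ (nj j - 1) * ∏ i ∈ univ.erase j, (x - z i) ^ (nj i - 1)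
        = ∏ i, (x - z i) ^ (nj i - 1) :=
      Finset.mul_prod_erase univ (fun i => (x - z i) ^ (nj i - 1)) (mem_univ j)
    rw [h1, ← h2]; ring
  have esum : ∑ j, (∏ i ∈ univ.erase j, (x - z i) ^ (nj i)) •
        ((nj j : ℂ) * (x - z j) ^ (nj j - 1) * 1)
      = (∏ i, (x - z i) ^ (nj i - 1)) * ∑ j, (nj j : ℂ) * ∏ i ∈ univ.erase j, (x - z i) := by
    rw [Finset.mul_sum]
    refine Finset.sum_congr rfl fun j _ => ?_
    rw [smul_eq_mul]
    linear_combination (nj j : ℂ) * eterm j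
  rw [eP, esum, e2]; ring

theorem stmt5 (n k : ℕ) (hn : 1 ≤ n) (hk : 1 ≤ k)
    (z w : Fin k → ℂ) (nj : Fin k → ℕ) (hnj : ∀ j, 1 ≤ nj j)
    (hz1 : ∀ j, z j ≠ 1) (hzle : ∀ j, ‖z j‖ ≤ 1)
    (hzdist : Function.Injective z)
    (m : ℕ) (hm : m = n + ∑ j, nj j)
    (hw1 : ∀ j, w j ≠ 1)
    (p : ℂ → ℂ) (hp : p = fun x => (x - 1) ^ n * ∏ j, (x - z j) ^ nj j)
    (hderiv : ∀ x : ℂ, deriv p x =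
      (m : ℂ) * (x - 1) ^ (n - 1) * (∏ j, (x - z j) ^ (nj j - 1)) *
        ∏ j, (x - w j)) :
    ∑ j, 1 / (1 - w j) = (1 / (n : ℂ)) * ∑ j, ((nj j : ℂ) + n) / (1 - z j) := by
  classical
  -- the two "quotient" polynomials agree as functions
  have hQReq : (fun x : ℂ => (n:ℂ) * ∏ j, (x - z j)
        + (x - 1) * ∑ j, (nj j : ℂ) * ∏ i ∈ univ.erase j, (x - z i))
      = fun x : ℂ => (m:ℂ) * ∏ j, (x - w j) := by
    refine Continuous.ext_on
      ((((Set.finite_singleton (1:ℂ)).union (Set.finite_range z)).countable).dense_compl ℂ)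
      (by fun_prop) (by fun_prop) ?_
    intro x hx
    simp only [Set.mem_compl_iff, Set.mem_union, Set.mem_singleton_iff, Set.mem_range,
      not_or, not_exists] at hx
    obtain ⟨hx1, hxz⟩ := hx
    have hf : HasDerivAt (fun x : ℂ => (x-1)^n) ((n:ℂ) * (x-1)^(n-1) * 1) x :=
      ((hasDerivAt_id x).sub_const 1).pow n
    have hG : HasDerivAt (fun x : ℂ => ∏ j, (x - z j) ^ nj j)
        (∑ j, (∏ i ∈ univ.erase j, (x - z i) ^ (nj i)) •
          ((nj j : ℂ) * (x - z j) ^ (nj j - 1) * 1)) x :=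
      HasDerivAt.fun_finsetProd (fun j _ => ((hasDerivAt_id x).sub_const (z j)).pow (nj j))
    have hD : deriv p x = (n:ℂ) * (x-1)^(n-1) * 1 * ∏ j, (x - z j) ^ (nj j)
        + (x-1)^n * ∑ j, (∏ i ∈ univ.erase j, (x - z i) ^ (nj i)) •
            ((nj j : ℂ) * (x - z j) ^ (nj j - 1) * 1) := by
      rw [hp]; exact (hf.mul hG).deriv
    have heq := hD.symm.trans (hderiv x)
    rw [stmt5_factored k n hn z nj hnj x] at heq
    have hC : (x-1)^(n-1) * (∏ j, (x - z j) ^ (nj j - 1)) ≠ 0 :=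
      mul_ne_zero (pow_ne_zero _ (sub_ne_zero.mpr hx1))
        (prod_ne_zero_iff.mpr fun j _ =>
          pow_ne_zero _ (sub_ne_zero.mpr fun h => hxz j h.symm))
    show (n:ℂ) * ∏ j, (x - z j)
        + (x - 1) * ∑ j, (nj j : ℂ) * ∏ i ∈ univ.erase j, (x - z i)
      = (m:ℂ) * ∏ j, (x - w j)
    apply mul_left_cancel₀ hC
    linear_combination heq
  -- value at 1
  have h1 : (n:ℂ) * ∏ j, ((1:ℂ) - z j) = (m:ℂ) * ∏ j, ((1:ℂ) - w j) := by
    have := congrFun hQReq 1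
    simpa using this
  -- derivative at 1
  have hP1 : HasDerivAt (fun x : ℂ => ∏ j, (x - z j))
      (∑ j, (∏ i ∈ univ.erase j, ((1:ℂ) - z i)) • (1:ℂ)) 1 :=
    HasDerivAt.fun_finsetProd (fun j _ => (hasDerivAt_id 1).sub_const (z j))
  have hSdiff : DifferentiableAt ℂ
      (fun x : ℂ => ∑ j, (nj j : ℂ) * ∏ i ∈ univ.erase j, (x - z i)) 1 := by fun_prop
  have hS := hSdiff.hasDerivAt
  have hQd : HasDerivAt (fun x : ℂ => (n:ℂ) * ∏ j, (x - z j)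
        + (x - 1) * ∑ j, (nj j : ℂ) * ∏ i ∈ univ.erase j, (x - z i))
      ((n:ℂ) * ∑ j, (∏ i ∈ univ.erase j, ((1:ℂ) - z i)) • (1:ℂ)
        + (1 * ∑ j, (nj j : ℂ) * ∏ i ∈ univ.erase j, ((1:ℂ) - z i)
          + ((1:ℂ) - 1) * deriv (fun x : ℂ => ∑ j, (nj j : ℂ) *
              ∏ i ∈ univ.erase j, (x - z i)) 1)) 1 :=
    (hP1.const_mul _).add (((hasDerivAt_id 1).sub_const 1).mul hS)
  have hRd : HasDerivAt (fun x : ℂ => (m:ℂ) * ∏ j, (x - w j))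
      ((m:ℂ) * ∑ j, (∏ i ∈ univ.erase j, ((1:ℂ) - w i)) • (1:ℂ)) 1 :=
    (HasDerivAt.fun_finsetProd (fun j _ => (hasDerivAt_id 1).sub_const (w j))).const_mul _
  have h2 : (n:ℂ) * ∑ j, ∏ i ∈ univ.erase j, ((1:ℂ) - z i)
      + ∑ j, (nj j : ℂ) * ∏ i ∈ univ.erase j, ((1:ℂ) - z i)
      = (m:ℂ) * ∑ j, ∏ i ∈ univ.erase j, ((1:ℂ) - w i) := by
    have hd : deriv (fun x : ℂ => (n:ℂ) * ∏ j, (x - z j)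
        + (x - 1) * ∑ j, (nj j : ℂ) * ∏ i ∈ univ.erase j, (x - z i)) 1
        = deriv (fun x : ℂ => (m:ℂ) * ∏ j, (x - w j)) 1 := by rw [hQReq]
    have := (hQd.deriv.symm.trans hd).trans hRd.deriv
    simpa using this
  -- nonvanishing facts
  have hzne : ∀ j, ((1:ℂ) - z j) ≠ 0 := fun j => sub_ne_zero.mpr fun h => hz1 j h.symm
  have hwne : ∀ j, ((1:ℂ) - w j) ≠ 0 := fun j => sub_ne_zero.mpr fun h => hw1 j h.symm
  have hPz : (∏ j, ((1:ℂ) - z j)) ≠ 0 := prod_ne_zero_iff.mpr fun j _ => hzne j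
  have hPw : (∏ j, ((1:ℂ) - w j)) ≠ 0 := prod_ne_zero_iff.mpr fun j _ => hwne j
  have hn0 : (n:ℂ) ≠ 0 := Nat.cast_ne_zero.mpr (by omega)
  -- rewrite both sides over common denominators
  have hL : ∑ j, 1 / (1 - w j)
      = (∑ j, ∏ i ∈ univ.erase j, ((1:ℂ) - w i)) / ∏ j, ((1:ℂ) - w j) := by
    rw [Finset.sum_div]
    refine Finset.sum_congr rfl fun j _ => ?_
    have hB : (∏ i ∈ univ.erase j, ((1:ℂ) - w i)) ≠ 0 :=
      prod_ne_zero_iff.mpr fun i _ => hwne i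
    rw [← Finset.mul_prod_erase univ _ (mem_univ j),
      div_eq_div_iff (hwne j) (mul_ne_zero (hwne j) hB)]
    ring
  have hRR : ∑ j, ((nj j : ℂ) + n) / (1 - z j)
      = (∑ j, ((nj j : ℂ) + n) * ∏ i ∈ univ.erase j, ((1:ℂ) - z i)) / ∏ j, ((1:ℂ) - z j) := by
    rw [Finset.sum_div]
    refine Finset.sum_congr rfl fun j _ => ?_
    have hB : (∏ i ∈ univ.erase j, ((1:ℂ) - z i)) ≠ 0 :=
      prod_ne_zero_iff.mpr fun i _ => hzne i
    rw [← Finset.mul_prod_erase univ _ (mem_univ j),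
      div_eq_div_iff (hzne j) (mul_ne_zero (hzne j) hB)]
    ring
  have hsplit : ∑ j, ((nj j : ℂ) + n) * ∏ i ∈ univ.erase j, ((1:ℂ) - z i)
      = ∑ j, (nj j : ℂ) * ∏ i ∈ univ.erase j, ((1:ℂ) - z i)
        + (n:ℂ) * ∑ j, ∏ i ∈ univ.erase j, ((1:ℂ) - z i) := by
    rw [Finset.mul_sum, ← Finset.sum_add_distrib]
    exact Finset.sum_congr rfl fun j _ => by ring
  rw [hL, hRR, hsplit]
  have hfin : (1 / (n:ℂ)) * ((∑ j, (nj j : ℂ) * ∏ i ∈ univ.erase j, ((1:ℂ) - z i)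
      + (n:ℂ) * ∑ j, ∏ i ∈ univ.erase j, ((1:ℂ) - z i)) / ∏ j, ((1:ℂ) - z j))
      = (∑ j, (nj j : ℂ) * ∏ i ∈ univ.erase j, ((1:ℂ) - z i)
        + (n:ℂ) * ∑ j, ∏ i ∈ univ.erase j, ((1:ℂ) - z i)) / ((n:ℂ) * ∏ j, ((1:ℂ) - z j)) := by
    ring
  rw [hfin, div_eq_div_iff hPw (mul_ne_zero hn0 hPz)]
  linear_combination (∑ j, ∏ i ∈ univ.erase j, ((1:ℂ) - w i)) * h1
    - (∏ j, ((1:ℂ) - w j)) * h2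
end

section
/- Let p(z) = (z−1)^n ∏_{j=1}^k (z−z_j)^{n_j} with n ≥ 1, k ≥ 1, n_j ≥ 1, z_j distinct, z_j ≠ 1, |z_j| ≤ 1, and let w_1,…,w_k be the roots of p' other than 1 and the z_j (counted with multiplicity), with m = n + ∑ n_j. Then there exists j with Re(1/(1 − w_j)) ≥ (m + (k−1)n)/(2kn), equivalently |w_j − (m−n)/(m+(k−1)n)| ≤ kn/(m+(k−1)n). -/
open Finset

lemma re_half (z : ℂ) (h1 : z ≠ 1) (h2 : ‖z‖ ≤ 1) :
    (1/2 : ℝ) ≤ (1 / (1 - z)).re := by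
  have hz : (1 : ℂ) - z ≠ 0 := sub_ne_zero.mpr (Ne.symm h1)
  have hns : 0 < Complex.normSq (1 - z) := Complex.normSq_pos.mpr hz
  have h2' : Complex.normSq z ≤ 1 := by
    have := Complex.sq_norm z
    nlinarith [norm_nonneg z]
  have hre : ((1 / (1 - z)).re) = (1 - z).re / Complex.normSq (1 - z) := by
    rw [one_div, Complex.inv_re]
  rw [hre, le_div_iff₀ hns]
  have hns' : Complex.normSq (1 - z) = 1 - 2 * z.re + Complex.normSq z := by
    simp [Complex.normSq_apply, Complex.sub_re, Complex.sub_im]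
    ring
  simp only [Complex.sub_re, Complex.one_re]
  nlinarith

lemma disk (w : ℂ) (r : ℝ) (hr : 0 < r) (h : 1 / (2 * r) ≤ (1 / (1 - w)).re) :
    ‖w - ((1 : ℂ) - r)‖ ≤ r := by
  set u := 1 - w with hu
  have hupos : 0 < (1 / u).re := lt_of_lt_of_le (by positivity) h
  have hu0 : u ≠ 0 := by intro h0; rw [h0] at hupos; simp at hupos
  have hns : 0 < Complex.normSq u := Complex.normSq_pos.mpr hu0
  have hre : (1 / u).re = u.re / Complex.normSq u := by rw [one_div, Complex.inv_re]
  rw [hre, div_le_div_iff₀ (by positivity) hns, one_mul] at h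
  have key : Complex.normSq (w - ((1 : ℂ) - r)) ≤ r ^ 2 := by
    have : w - ((1:ℂ) - r) = (r : ℂ) - u := by rw [hu]; ring
    rw [this]
    have : Complex.normSq ((r : ℂ) - u) = r ^ 2 - 2 * r * u.re + Complex.normSq u := by
      simp [Complex.normSq_apply, Complex.sub_re, Complex.sub_im]
      ring
    rw [this]; nlinarith
  have := Real.sqrt_le_sqrt key
  rwa [Real.sqrt_sq hr.le, ← Complex.norm_def] at this



lemma key6 (n k : ℕ) (hn : 1 ≤ n) (z w : Fin k → ℂ) (nj : Fin k → ℕ) (hnj : ∀ j, 1 ≤ nj j)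
    (m : ℕ)
    (p : ℂ → ℂ) (hp : p = fun x => (x - 1) ^ n * ∏ j, (x - z j) ^ nj j)
    (hderiv : ∀ x : ℂ, deriv p x =
      (m : ℂ) * (x - 1) ^ (n - 1) * (∏ j, (x - z j) ^ (nj j - 1)) *
        ∏ j, (x - w j)) :
    ((m : ℂ) * ∏ j, (1 - w j) = (n : ℂ) * ∏ j, (1 - z j)) ∧
    ((m : ℂ) * ∑ j, ∏ i ∈ univ.erase j, (1 - w i) =
      ∑ j, ((n : ℂ) + (nj j : ℂ)) * ∏ i ∈ univ.erase j, (1 - z i)) := by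
  -- names
  set A : ℂ → ℂ := fun x => ∏ j, (x - z j) with hA
  set Aj : Fin k → ℂ → ℂ := fun j x => ∏ i ∈ univ.erase j, (x - z i) with hAj
  set Wf : ℂ → ℂ := fun x => ∏ j, (x - w j) with hW
  set S : ℂ → ℂ := fun x => ∑ j, (nj j : ℂ) * Aj j x with hS
  set F : ℂ → ℂ := fun x => (m : ℂ) * Wf x with hF
  set G : ℂ → ℂ := fun x => (n : ℂ) * A x + (x - 1) * S x with hG
  -- Step 1: F = G away from the roots
  have step1 : ∀ x : ℂ, x ≠ 1 → (∀ j, x ≠ z j) → F x = G x := by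
    intro x hx1 hxz
    have h1 : HasDerivAt (fun x : ℂ => (x - 1) ^ n) ((n : ℂ) * (x - 1) ^ (n - 1)) x := by
      simpa using ((hasDerivAt_id x).sub_const 1).fun_pow n
    have h2 : HasDerivAt (fun x : ℂ => ∏ j, (x - z j) ^ nj j)
        (∑ j, (∏ i ∈ univ.erase j, (x - z i) ^ nj i) *
          ((nj j : ℂ) * (x - z j) ^ (nj j - 1))) x := by
      have := HasDerivAt.fun_finsetProd (u := univ) (f := fun j (x : ℂ) => (x - z j) ^ nj j)
        (f' := fun j => (nj j : ℂ) * (x - z j) ^ (nj j - 1)) (x := x) ?_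
      · simpa [smul_eq_mul] using this
      · intro i _
        simpa using ((hasDerivAt_id x).sub_const (z i)).fun_pow (nj i)
    have hdp : HasDerivAt p
        ((n : ℂ) * (x - 1) ^ (n - 1) * (∏ j, (x - z j) ^ nj j) +
         (x - 1) ^ n * ∑ j, (∏ i ∈ univ.erase j, (x - z i) ^ nj i) *
          ((nj j : ℂ) * (x - z j) ^ (nj j - 1))) x := by
      rw [hp]; exact h1.mul h2
    have heq := (hdp.deriv).symm.trans (hderiv x)
    -- heq : computed = m * ...
    -- rewrite products
    have lemA : (∏ j, (x - z j) ^ nj j) = (∏ j, (x - z j) ^ (nj j - 1)) * A x := by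
      rw [hA, ← Finset.prod_mul_distrib]
      exact Finset.prod_congr rfl fun j _ => by
        rw [← pow_succ, Nat.sub_add_cancel (hnj j)]
    have lemB : (x - 1) ^ n = (x - 1) ^ (n - 1) * (x - 1) := by
      rw [← pow_succ, Nat.sub_add_cancel hn]
    have lemC : ∀ j : Fin k, (∏ i ∈ univ.erase j, (x - z i) ^ nj i) *
        ((nj j : ℂ) * (x - z j) ^ (nj j - 1)) =
        (∏ i, (x - z i) ^ (nj i - 1)) * ((nj j : ℂ) * Aj j x) := by
      intro j
      have e1 : (∏ i ∈ univ.erase j, (x - z i) ^ nj i) =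
          (∏ i ∈ univ.erase j, (x - z i) ^ (nj i - 1)) * Aj j x := by
        rw [hAj, ← Finset.prod_mul_distrib]
        exact Finset.prod_congr rfl fun i _ => by
          rw [← pow_succ, Nat.sub_add_cancel (hnj i)]
      have e2 : (∏ i, (x - z i) ^ (nj i - 1)) =
          (x - z j) ^ (nj j - 1) * ∏ i ∈ univ.erase j, (x - z i) ^ (nj i - 1) :=
        (Finset.mul_prod_erase univ _ (mem_univ j)).symm
      rw [e1, e2]; ring
    rw [Finset.sum_congr rfl (fun j _ => lemC j), ← Finset.mul_sum, lemA, lemB] at heq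
    -- now cancel c := (x-1)^(n-1) * ∏ (x - z j)^(nj j - 1)
    have hc : (x - 1) ^ (n - 1) * (∏ j, (x - z j) ^ (nj j - 1)) ≠ 0 := by
      apply mul_ne_zero
      · exact pow_ne_zero _ (sub_ne_zero.mpr hx1)
      · exact Finset.prod_ne_zero_iff.mpr fun j _ =>
          pow_ne_zero _ (sub_ne_zero.mpr (hxz j))
    apply mul_left_cancel₀ hc
    rw [hF, hG]
    linear_combination -heq
  -- Step 2: F = G everywhere
  have hFG : F = G := by
    have hdense : Dense (insert (1 : ℂ) (Set.range z))ᶜ := by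
      have : (insert (1 : ℂ) (Set.range z)).Countable :=
        ((Set.finite_range z).insert 1).countable
      exact this.dense_compl ℂ
    have hFc : Continuous F := by
      rw [hF, hW]
      exact continuous_const.mul (continuous_finset_prod _ fun j _ => by fun_prop)
    have hGc : Continuous G := by
      rw [hG, hA, hS, hAj]
      apply Continuous.add
      · exact continuous_const.mul (continuous_finset_prod _ fun j _ => by fun_prop)
      · apply Continuous.mul (by fun_prop)
        exact continuous_finset_sum _ fun j _ =>
          continuous_const.mul (continuous_finset_prod _ fun i _ => by fun_prop)
    apply Continuous.ext_on hdense hFc hGc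
    intro x hx
    simp only [Set.mem_compl_iff, Set.mem_insert_iff, Set.mem_range, not_or, not_exists] at hx
    exact step1 x hx.1 fun j => hx.2 j ∘ Eq.symm
  constructor
  · have := congrFun hFG 1
    rw [hF, hG] at this
    simpa using this
  -- Step 4: derivatives at 1
  · have hWd : HasDerivAt Wf (∑ j, ∏ i ∈ univ.erase j, ((1 : ℂ) - w i)) 1 := by
      have := HasDerivAt.fun_finsetProd (u := univ) (f := fun j (x : ℂ) => x - w j)
        (f' := fun _ => 1) (x := 1) (fun i _ => (hasDerivAt_id 1).sub_const (w i))
      simpa using this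
    have hAd : HasDerivAt A (∑ j, ∏ i ∈ univ.erase j, ((1 : ℂ) - z i)) 1 := by
      have := HasDerivAt.fun_finsetProd (u := univ) (f := fun j (x : ℂ) => x - z j)
        (f' := fun _ => 1) (x := 1) (fun i _ => (hasDerivAt_id 1).sub_const (z i))
      simpa [hA] using this
    have hAjd : ∀ j : Fin k, HasDerivAt (Aj j)
        (∑ i ∈ univ.erase j, ∏ l ∈ (univ.erase j).erase i, ((1 : ℂ) - z l)) 1 := by
      intro j
      have := HasDerivAt.fun_finsetProd (u := univ.erase j) (f := fun i (x : ℂ) => x - z i)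
        (f' := fun _ => 1) (x := 1) (fun i _ => (hasDerivAt_id 1).sub_const (z i))
      simpa [hAj] using this
    have hSd : HasDerivAt S
        (∑ j, (nj j : ℂ) * ∑ i ∈ univ.erase j, ∏ l ∈ (univ.erase j).erase i, ((1 : ℂ) - z l)) 1 := by
      rw [hS]
      exact HasDerivAt.fun_sum fun j _ => (hAjd j).const_mul _
    have hFd : HasDerivAt F ((m : ℂ) * ∑ j, ∏ i ∈ univ.erase j, ((1 : ℂ) - w i)) 1 := by
      rw [hF]; exact hWd.const_mul _
    have hGd : HasDerivAt G ((n : ℂ) * ∑ j, ∏ i ∈ univ.erase j, ((1 : ℂ) - z i) +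
        (1 * S 1 + ((1 : ℂ) - 1) *
          ∑ j, (nj j : ℂ) * ∑ i ∈ univ.erase j, ∏ l ∈ (univ.erase j).erase i, ((1 : ℂ) - z l))) 1 := by
      rw [hG]
      exact (hAd.const_mul _).add (((hasDerivAt_id 1).sub_const 1).mul hSd)
    have hde : (m : ℂ) * ∑ j, ∏ i ∈ univ.erase j, ((1 : ℂ) - w i) =
        (n : ℂ) * ∑ j, ∏ i ∈ univ.erase j, ((1 : ℂ) - z i) + S 1 := by
      have e1 := hFd.deriv
      have e2 := hGd.deriv
      rw [hFG] at e1
      rw [e1] at e2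
      rw [e2]; ring
    rw [hde, hS]
    simp only [Finset.mul_sum, ← Finset.sum_add_distrib]
    exact Finset.sum_congr rfl fun j _ => by rw [hAj]; ring

theorem stmt6 (n k : ℕ) (hn : 1 ≤ n) (hk : 1 ≤ k)
    (z w : Fin k → ℂ) (nj : Fin k → ℕ) (hnj : ∀ j, 1 ≤ nj j)
    (hz1 : ∀ j, z j ≠ 1) (hzle : ∀ j, ‖z j‖ ≤ 1)
    (hzdist : Function.Injective z)
    (m : ℕ) (hm : m = n + ∑ j, nj j)
    (hw1 : ∀ j, w j ≠ 1)
    (p : ℂ → ℂ) (hp : p = fun x => (x - 1) ^ n * ∏ j, (x - z j) ^ nj j)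
    (hderiv : ∀ x : ℂ, deriv p x =
      (m : ℂ) * (x - 1) ^ (n - 1) * (∏ j, (x - z j) ^ (nj j - 1)) *
        ∏ j, (x - w j)) :
    ∃ j : Fin k,
      ((m : ℝ) + ((k : ℝ) - 1) * n) / (2 * k * n) ≤ (1 / (1 - w j)).re ∧
      ‖w j - ((m : ℂ) - n) / ((m : ℂ) + ((k : ℂ) - 1) * n)‖ ≤
        (k : ℝ) * n / ((m : ℝ) + ((k : ℝ) - 1) * n) := by
  obtain ⟨ha, hb⟩ := key6 n k hn z w nj hnj m p hp hderiv
  haveI : NeZero k := ⟨by omega⟩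
  have hw0 : ∀ j, (1 : ℂ) - w j ≠ 0 := fun j => sub_ne_zero.mpr (Ne.symm (hw1 j))
  have hz0 : ∀ j, (1 : ℂ) - z j ≠ 0 := fun j => sub_ne_zero.mpr (Ne.symm (hz1 j))
  have hW1 : (∏ j, ((1 : ℂ) - w j)) ≠ 0 := Finset.prod_ne_zero_iff.mpr fun j _ => hw0 j
  have hA1 : (∏ j, ((1 : ℂ) - z j)) ≠ 0 := Finset.prod_ne_zero_iff.mpr fun j _ => hz0 j
  have hm2 : 2 ≤ m := by
    have : 1 ≤ ∑ j, nj j :=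
      le_trans (hnj ⟨0, by omega⟩) (Finset.single_le_sum (fun i _ => Nat.zero_le _) (mem_univ _))
    omega
  have hmC : (m : ℂ) ≠ 0 := Nat.cast_ne_zero.mpr (by omega)
  have hnC : (n : ℂ) ≠ 0 := Nat.cast_ne_zero.mpr (by omega)
  -- sum identity
  have hsum : (n : ℂ) * ∑ j, 1 / (1 - w j) = ∑ j, ((n : ℂ) + nj j) * (1 / (1 - z j)) := by
    have e1 : ∑ j, 1 / (1 - w j) =
        (∏ j, ((1 : ℂ) - w j))⁻¹ * ∑ j, ∏ i ∈ univ.erase j, (1 - w i) := by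
      rw [Finset.mul_sum]
      refine Finset.sum_congr rfl fun j _ => ?_
      rw [← Finset.mul_prod_erase univ _ (mem_univ j), mul_inv, mul_assoc,
        inv_mul_cancel₀ (Finset.prod_ne_zero_iff.mpr fun i _ => hw0 i), mul_one, one_div]
    have e2 : ∀ j : Fin k, ((n : ℂ) + nj j) * (1 / (1 - z j)) =
        ((n : ℂ) + nj j) * ((∏ i, ((1 : ℂ) - z i))⁻¹ * ∏ i ∈ univ.erase j, (1 - z i)) := by
      intro j
      rw [← Finset.mul_prod_erase univ _ (mem_univ j), mul_inv, mul_assoc,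
        inv_mul_cancel₀ (Finset.prod_ne_zero_iff.mpr fun i _ => hz0 i), mul_one, one_div]
    have e3 : ∑ j, ((n : ℂ) + nj j) * ((∏ i, ((1 : ℂ) - z i))⁻¹ * ∏ i ∈ univ.erase j, (1 - z i)) =
        (∏ i, ((1 : ℂ) - z i))⁻¹ * ∑ j, ((n : ℂ) + nj j) * ∏ i ∈ univ.erase j, (1 - z i) := by
      rw [Finset.mul_sum]
      exact Finset.sum_congr rfl fun j _ => by ring
    rw [e1, Finset.sum_congr rfl fun j _ => e2 j, e3, ← hb]
    field_simp
    linear_combination (-(∑ j, ∏ i ∈ univ.erase j, ((1:ℂ) - w i))) * ha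
  -- real parts
  have hre : (n : ℝ) * ∑ j, (1 / (1 - w j)).re = ∑ j, ((n : ℝ) + nj j) * (1 / (1 - z j)).re := by
    have := congrArg Complex.re hsum
    simpa [Complex.re_sum, Complex.mul_re, Complex.add_re, Complex.add_im,
      Finset.mul_sum] using this
  have hbound : ((m : ℝ) + ((k : ℝ) - 1) * n) / 2 ≤ (n : ℝ) * ∑ j, (1 / (1 - w j)).re := by
    rw [hre]
    have step : ∑ j, ((n : ℝ) + nj j) * (1/2 : ℝ) ≤ ∑ j, ((n : ℝ) + nj j) * (1 / (1 - z j)).re := by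
      refine Finset.sum_le_sum fun j _ => ?_
      have hc : (0 : ℝ) ≤ (n : ℝ) + nj j := by positivity
      exact mul_le_mul_of_nonneg_left (re_half (z j) (hz1 j) (hzle j)) hc
    refine le_trans (le_of_eq ?_) step
    rw [← Finset.sum_mul, Finset.sum_add_distrib, Finset.sum_const, card_univ, Fintype.card_fin]
    have hmr : (m : ℝ) = n + ∑ j, (nj j : ℝ) := by rw [hm]; push_cast; ring
    rw [hmr]; push_cast; ring
  -- pigeonhole
  have hkn : (0 : ℝ) < (k : ℝ) * n := by positivity
  have hD : (0 : ℝ) < (m : ℝ) + ((k : ℝ) - 1) * n := by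
    have h1 : (1 : ℝ) ≤ k := by exact_mod_cast hk
    have h2 : (2 : ℝ) ≤ m := by exact_mod_cast hm2
    nlinarith [Nat.cast_nonneg (α := ℝ) n]
  set c : ℝ := ((m : ℝ) + ((k : ℝ) - 1) * n) / (2 * k * n) with hc
  have hpig : ∃ j : Fin k, c ≤ (1 / (1 - w j)).re := by
    have hsum2 : ∑ _j : Fin k, c ≤ ∑ j, (1 / (1 - w j)).re := by
      rw [Finset.sum_const, card_univ, Fintype.card_fin, nsmul_eq_mul, hc]
      have h1 : (k : ℝ) * (((m:ℝ) + ((k:ℝ)-1)*n) / (2 * k * n)) =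
          ((m:ℝ) + ((k:ℝ)-1)*n) / (2 * n) := by
        field_simp
      rw [h1, div_le_iff₀ (by positivity : (0:ℝ) < 2 * n)]
      rw [div_le_iff₀ (by norm_num : (0:ℝ) < 2)] at hbound
      linarith
    obtain ⟨j, _, hj⟩ := Finset.exists_le_of_sum_le Finset.univ_nonempty hsum2
    exact ⟨j, hj⟩
  obtain ⟨j, hj⟩ := hpig
  refine ⟨j, hj, ?_⟩
  set r : ℝ := (k : ℝ) * n / ((m : ℝ) + ((k : ℝ) - 1) * n) with hrdef
  have hr : 0 < r := by positivity
  have hcr : 1 / (2 * r) = c := by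
    rw [hrdef, hc,
      show (2:ℝ) * ((k:ℝ)*n / ((m:ℝ)+((k:ℝ)-1)*n)) = (2*(k:ℝ)*n) / ((m:ℝ)+((k:ℝ)-1)*n) from by ring,
      one_div_div]
  have := disk (w j) r hr (by rw [hcr]; exact hj)
  have hreal : (1:ℝ) - r = ((m:ℝ) - n) / ((m:ℝ) + ((k:ℝ)-1)*n) := by
    have e : (1:ℝ) - r = (((m:ℝ)+((k:ℝ)-1)*n) - (k:ℝ)*n) / ((m:ℝ)+((k:ℝ)-1)*n) := by
      rw [hrdef, sub_div, div_self (ne_of_gt hD)]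
    rw [e]; congr 1; ring
  have hcast : ((m : ℂ) - n) / ((m : ℂ) + ((k : ℂ) - 1) * n) = (1 : ℂ) - (r : ℂ) := by
    rw [show ((1:ℂ) - (r:ℂ)) = (((1 - r : ℝ)) : ℂ) by push_cast; ring, hreal]
    push_cast
    ring
  rwa [hcast]
end

section
/- Let p(z) = (z−1)^n ∏_{j=1}^k (z−z_j)^{n_j} with n ≥ 2, k ≥ 1, n_j ≥ 1, z_j distinct, z_j ≠ 1, |z_j| ≤ 1, and assume ∑_{j=1}^k n_j ≥ k·n. Then there exists ζ ≠ 1 with p'(ζ) = 0 and |ζ − 1/2| ≤ 1/2 (hence |1 − ζ| ≤ 1). -/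
open Polynomial


lemma disk_iff (ζ : ℂ) (h : ζ ≠ 1) : ‖ζ - 1/2‖ ≤ 1/2 ↔ 1 ≤ ((1 - ζ)⁻¹).re := by
  have hw : (1:ℂ) - ζ ≠ 0 := sub_ne_zero.mpr (Ne.symm h)
  have hns : 0 < Complex.normSq (1 - ζ) := Complex.normSq_pos.mpr hw
  rw [Complex.inv_re, le_div_iff₀ hns, Complex.norm_def,
    show (1/2:ℝ) = Real.sqrt (1/4) by rw [show (1/4:ℝ) = (1/2)^2 by norm_num, Real.sqrt_sq]; norm_num,
    Real.sqrt_le_sqrt_iff (by norm_num)]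
  simp only [Complex.normSq_apply, Complex.sub_re, Complex.sub_im, Complex.one_re, Complex.one_im]
  norm_num
  constructor <;> intro hh <;> nlinarith

lemma halfplane (w : ℂ) (h : w ≠ 1) (hle : ‖w‖ ≤ 1) : (1:ℝ)/2 ≤ ((1 - w)⁻¹).re := by
  have hw : (1:ℂ) - w ≠ 0 := sub_ne_zero.mpr (Ne.symm h)
  have hns : 0 < Complex.normSq (1 - w) := Complex.normSq_pos.mpr hw
  have h2 : Complex.normSq w ≤ 1 := by
    have := Complex.sq_norm w
    nlinarith [norm_nonneg w]
  rw [Complex.inv_re, le_div_iff₀ hns]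
  simp [Complex.normSq_apply, Complex.sub_re, Complex.sub_im] at *
  nlinarith

lemma evalderiv_multiset (s : Multiset ℂ) (h1 : (1:ℂ) ∉ s) :
    Polynomial.eval 1 (Polynomial.derivative (s.map (fun z => X - C z)).prod)
      = Polynomial.eval 1 ((s.map (fun z => X - C z)).prod)
        * (s.map (fun z => (1 - z)⁻¹)).sum := by
  induction s using Multiset.induction with
  | empty => simp
  | cons a s ih =>
    have ha : (1:ℂ) - a ≠ 0 := sub_ne_zero.mpr (fun h => h1 (by rw [h]; exact Multiset.mem_cons_self _ _))
    have ih' := ih (fun h => h1 (Multiset.mem_cons_of_mem h))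
    simp only [Multiset.map_cons, Multiset.prod_cons, derivative_mul, eval_add, eval_mul,
      Multiset.sum_cons, derivative_X_sub_C, eval_one, eval_sub, eval_X, eval_C, one_mul] at *
    rw [ih']
    field_simp

theorem stmt7 (n k : ℕ) (hn : 2 ≤ n) (hk : 1 ≤ k)
    (z : Fin k → ℂ) (nj : Fin k → ℕ) (hnj : ∀ j, 1 ≤ nj j)
    (hz1 : ∀ j, z j ≠ 1) (hzle : ∀ j, ‖z j‖ ≤ 1)
    (hzdist : Function.Injective z)
    (hsum : k * n ≤ ∑ j, nj j)
    (p : ℂ → ℂ) (hp : p = fun x => (x - 1) ^ n * ∏ j, (x - z j) ^ nj j) :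
    ∃ ζ : ℂ, ζ ≠ 1 ∧ deriv p ζ = 0 ∧ ‖ζ - 1 / 2‖ ≤ 1 / 2 ∧
      ‖1 - ζ‖ ≤ 1 := by
  set N : ℕ := ∑ j, nj j with hN
  set Q : ℂ[X] := ∏ j, (X - C (z j)) ^ nj j with hQ
  set F : ℂ[X] := C (n:ℂ) * Q + (X - 1) * derivative Q with hF
  set P : ℂ[X] := (X - 1) ^ n * Q with hP
  -- p is eval of P
  have hpP : p = fun x => eval x P := by
    funext x; simp [hp, hP, hQ, eval_prod]
  -- derivative of P
  have hderivP : derivative P = (X - 1) ^ (n-1) * F := by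
    rw [hP, derivative_mul, derivative_pow, hF]
    have h1 : derivative (X - 1 : ℂ[X]) = 1 := by
      simp [derivative_X_sub_C]
    rw [h1]
    have h2 : (X - 1 : ℂ[X]) ^ n = (X-1)^(n-1) * (X-1) := by
      rw [← pow_succ]; congr 1; omega
    rw [h2]; ring
  -- deriv p
  have hderivp : ∀ ζ, deriv p ζ = (ζ - 1)^(n-1) * eval ζ F := by
    intro ζ
    rw [hpP, Polynomial.deriv, hderivP]
    simp
  -- Q monic, degree N
  have hQmonic : Q.Monic := monic_prod_of_monic _ _ (fun j _ => (monic_X_sub_C (z j)).pow (nj j))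
  have hQdeg : Q.natDegree = N := by
    rw [hQ, natDegree_prod _ _ (fun j _ => pow_ne_zero _ (X_sub_C_ne_zero (z j)))]
    simp [natDegree_pow, hN]
  have hNk : k ≤ N := by
    calc k = ∑ j : Fin k, 1 := by simp
    _ ≤ N := Finset.sum_le_sum (fun j _ => hnj j)
  have hN1 : 1 ≤ N := le_trans hk hNk
  -- coeff of F at N
  have hQ'deg : (derivative Q).natDegree ≤ N - 1 := hQdeg ▸ natDegree_derivative_le Q
  have hFcoeff : F.coeff N = (n : ℂ) + N := by
    rw [hF]
    rw [coeff_add, coeff_C_mul]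
    have e1 : Q.coeff N = 1 := by
      rw [← hQdeg]; exact hQmonic.coeff_natDegree
    have e2 : ((X - 1) * derivative Q).coeff N = (N:ℂ) := by
      obtain ⟨M, hM⟩ : ∃ M, N = M + 1 := ⟨N-1, by omega⟩
      have : (X - 1 : ℂ[X]) * derivative Q = X * derivative Q - derivative Q := by ring
      rw [this, coeff_sub]
      have e3 : (derivative Q).coeff N = 0 :=
        coeff_eq_zero_of_natDegree_lt (lt_of_le_of_lt hQ'deg (by omega))
      rw [e3, hM, coeff_X_mul, coeff_derivative, show M + 1 = N by omega, e1, hM]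
      push_cast
      ring
    rw [e1, e2, mul_one]
  have hFdegle : F.natDegree ≤ N := by
    apply le_trans (natDegree_add_le _ _)
    apply max_le
    · exact le_trans (natDegree_C_mul_le _ _) (le_of_eq hQdeg)
    · apply le_trans (natDegree_mul_le)
      have : (X - 1 : ℂ[X]).natDegree = 1 := by
        simpa using natDegree_X_sub_C (1:ℂ)
      omega
  have hFcne : F.coeff N ≠ 0 := by
    rw [hFcoeff]
    intro h
    have h2 : ((n : ℝ) + N) = 0 := by exact_mod_cast congrArg Complex.re h
    have : (0:ℝ) < n := by positivity
    have : (0:ℝ) ≤ (N:ℝ) := by positivity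
    linarith
  have hFne : F ≠ 0 := fun h => hFcne (by simp [h])
  have hFdeg : F.natDegree = N := le_antisymm hFdegle (le_natDegree_of_ne_zero hFcne)
  have hQ1 : eval 1 Q ≠ 0 := by
    rw [hQ, eval_prod]
    apply Finset.prod_ne_zero_iff.mpr
    intro j _
    simp only [eval_pow, eval_sub, eval_X, eval_C]
    exact pow_ne_zero _ (sub_ne_zero.mpr (Ne.symm (hz1 j)))
  have hF1 : eval 1 F = (n:ℂ) * eval 1 Q := by
    simp [hF]
  have hF1ne : eval 1 F ≠ 0 := by
    rw [hF1]
    exact mul_ne_zero (Nat.cast_ne_zero.mpr (by omega)) hQ1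
  have hF'1 : eval 1 (derivative F) = ((n:ℂ)+1) * eval 1 (derivative Q) := by
    rw [hF, derivative_add, derivative_mul, derivative_mul, derivative_C,
      show derivative (X - 1 : ℂ[X]) = 1 by simp [derivative_X_sub_C]]
    simp
    ring
  -- roots of F
  have hsplits : Splits F := IsAlgClosed.splits F
  have hroots_card : Multiset.card F.roots = N := by
    rw [← hFdeg]; exact (splits_iff_card_roots).mp hsplits
  have h1nroots : (1:ℂ) ∉ F.roots := by
    intro h
    exact hF1ne ((mem_roots hFne).mp h)
  have hfact : F = C F.leadingCoeff * (F.roots.map fun a => X - C a).prod :=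
    hsplits.eq_prod_roots
  set Sroots : ℂ := (F.roots.map fun ζ => (1-ζ)⁻¹).sum with hSroots
  have hkey : eval 1 (derivative F) = eval 1 F * Sroots := by
    conv_lhs => rw [hfact]
    rw [derivative_C_mul, eval_C_mul, evalderiv_multiset _ h1nroots]
    conv_rhs => rw [hfact]
    rw [eval_C_mul]
    ring
  -- Q as multiset product
  set T2 : Multiset ℂ := ∑ j, (nj j) • ({z j} : Multiset ℂ) with hT2
  have hQT2 : Q = (T2.map fun w => X - C w).prod := by
    rw [hT2, show (Multiset.map (fun w => X - C w) (∑ j, (nj j) • ({z j} : Multiset ℂ)))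
        = ∑ j, Multiset.map (fun w => X - (C (w:ℂ))) ((nj j) • ({z j} : Multiset ℂ)) from
      map_sum (Multiset.mapAddMonoidHom _) _ _]
    rw [Multiset.prod_sum, hQ]
    congr 1
    funext j
    rw [Multiset.nsmul_singleton, Multiset.map_replicate, Multiset.prod_replicate]
  have h1nT2 : (1:ℂ) ∉ T2 := by
    intro h
    rw [hT2] at h
    obtain ⟨j, _, hj⟩ := Multiset.mem_sum.mp h
    rw [Multiset.nsmul_singleton] at hj
    exact hz1 j (Multiset.eq_of_mem_replicate hj).symm
  set S2 : ℂ := ∑ j, (nj j : ℂ) * (1 - z j)⁻¹ with hS2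
  have hT2sum : (T2.map fun w => (1-w)⁻¹).sum = S2 := by
    rw [hT2, show (Multiset.map (fun w => (1-w)⁻¹) (∑ j, (nj j) • ({z j} : Multiset ℂ)))
        = ∑ j, Multiset.map (fun w => (1-w)⁻¹) ((nj j) • ({z j} : Multiset ℂ)) from
      map_sum (Multiset.mapAddMonoidHom _) _ _]
    rw [Multiset.sum_sum, hS2]
    congr 1
    funext j
    rw [Multiset.nsmul_singleton, Multiset.map_replicate, Multiset.sum_replicate]
    simp [mul_comm]
  have hQlog : eval 1 (derivative Q) = eval 1 Q * S2 := by
    conv_lhs => rw [hQT2]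
    rw [evalderiv_multiset _ h1nT2, hT2sum, ← hQT2]
  -- main sum identity
  have hmain : Sroots = ((n:ℂ)+1) / n * S2 := by
    have h0 : eval 1 F * Sroots = eval 1 F * (((n:ℂ)+1) / n * S2) := by
      rw [← hkey, hF'1, hQlog, hF1]
      have hnne : (n:ℂ) ≠ 0 := Nat.cast_ne_zero.mpr (by omega)
      field_simp
    exact mul_left_cancel₀ hF1ne h0
  -- divisibility into F
  have hdvd : ∀ i : Fin k, (X - C (z i))^(nj i - 1) ∣ F := by
    intro i
    have hQd : (X - C (z i))^(nj i) ∣ Q := by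
      rw [hQ]; exact Finset.dvd_prod_of_mem _ (Finset.mem_univ i)
    have hQd' : (X - C (z i))^(nj i - 1) ∣ Q :=
      dvd_trans (pow_dvd_pow _ (Nat.sub_le _ _)) hQd
    obtain ⟨B, hB⟩ := hQd
    have hQ'd : (X - C (z i))^(nj i - 1) ∣ derivative Q := by
      rw [hB, derivative_mul, derivative_pow, derivative_X_sub_C]
      apply dvd_add
      · exact Dvd.dvd.mul_right (Dvd.dvd.mul_right (dvd_mul_left _ _) _) _
      · exact Dvd.dvd.mul_right (pow_dvd_pow _ (Nat.sub_le _ _)) _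
    rw [hF]
    exact dvd_add (Dvd.dvd.mul_left hQd' _) (Dvd.dvd.mul_left hQ'd _)
  -- the multiset T of known roots
  set T : Multiset ℂ := ∑ j, (nj j - 1) • ({z j} : Multiset ℂ) with hT
  have hTle : T ≤ F.roots := by
    classical
    rw [Multiset.le_iff_count]
    intro a
    rw [hT, Multiset.count_sum']
    by_cases ha : ∃ i, a = z i
    · obtain ⟨i, rfl⟩ := ha
      have : ∑ j, Multiset.count (z i) ((nj j - 1) • ({z j} : Multiset ℂ)) = nj i - 1 := by
        rw [Finset.sum_eq_single i]
        · rw [Multiset.count_nsmul, Multiset.count_singleton, if_pos rfl, mul_one]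
        · intro j _ hj
          rw [Multiset.count_nsmul, Multiset.count_singleton,
            if_neg (fun h => hj (hzdist h.symm)), mul_zero]
        · intro h; exact absurd (Finset.mem_univ i) h
      rw [this, count_roots]
      exact (le_rootMultiplicity_iff hFne).mpr (hdvd i)
    · have : ∑ j, Multiset.count a ((nj j - 1) • ({z j} : Multiset ℂ)) = 0 := by
        apply Finset.sum_eq_zero
        intro j _
        rw [Multiset.count_nsmul, Multiset.count_singleton,
          if_neg (fun h => ha ⟨j, h⟩), mul_zero]
      rw [this]
      exact Nat.zero_le _
  set R : Multiset ℂ := F.roots - T with hR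
  have hRT : R + T = F.roots := tsub_add_cancel_of_le hTle
  have hcardT : Multiset.card T + k = N := by
    have h1 : Multiset.card T = ∑ j, (nj j - 1) := by
      rw [hT, Multiset.card_sum]
      simp only [Multiset.card_nsmul, Multiset.card_singleton, mul_one]
    have h2 : ∑ j, (nj j - 1) + ∑ _j : Fin k, (1:ℕ) = N := by
      rw [← Finset.sum_add_distrib, hN]
      exact Finset.sum_congr rfl fun j _ => Nat.sub_add_cancel (hnj j)
    have h3 : ∑ _j : Fin k, (1:ℕ) = k := by simp
    omega
  have hcardR : Multiset.card R = k := by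
    have := congrArg Multiset.card hRT
    rw [Multiset.card_add, hroots_card] at this
    omega
  -- contradiction setup
  by_contra hcon
  push_neg at hcon
  set g : ℂ → ℝ := fun ζ => ((1-ζ)⁻¹).re with hg
  have hroot_lt : ∀ ζ ∈ F.roots, g ζ < 1 := by
    intro ζ hζ
    have hζ1 : ζ ≠ 1 := fun h => h1nroots (h ▸ hζ)
    have hd : deriv p ζ = 0 := by
      rw [hderivp, (mem_roots hFne).mp hζ, mul_zero]
    have habs : ¬ ‖ζ - 1/2‖ ≤ 1/2 := by
      intro hA
      have hhalf : ‖(1/2:ℂ)‖ = 1/2 := by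
        rw [show (1/2:ℂ) = ((1/2:ℝ):ℂ) by push_cast; ring, Complex.norm_real]
        norm_num
      have hB : ‖1 - ζ‖ ≤ 1 := by
        calc ‖1 - ζ‖ = ‖(1/2:ℂ) - (ζ - 1/2)‖ := by ring_nf
        _ ≤ ‖(1/2:ℂ)‖ + ‖ζ - 1/2‖ := by
            exact norm_sub_le _ _
        _ ≤ 1/2 + 1/2 := by rw [hhalf]; linarith
        _ = 1 := by norm_num
      exact absurd hB (not_le.mpr (hcon ζ hζ1 hd hA))
    rw [hg]
    by_contra hge
    push_neg at hge
    exact habs ((disk_iff ζ hζ1).mpr hge)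
  have hmap_sum_re : ∀ (s : Multiset ℂ), ((s.map fun ζ => (1-ζ)⁻¹).sum).re = (s.map g).sum := by
    intro s
    have h := map_multiset_sum Complex.reAddGroupHom (s.map fun ζ => (1-ζ)⁻¹)
    rw [Multiset.map_map] at h
    exact h
  set r : Fin k → ℝ := fun j => g (z j) with hrdef
  have hrhalf : ∀ j, 1/2 ≤ r j := fun j => halfplane (z j) (hz1 j) (hzle j)
  set A : ℝ := ∑ j, (nj j : ℝ) * r j with hAdef
  set Bv : ℝ := ∑ j, ((nj j - 1 : ℕ) : ℝ) * r j with hBdef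
  have hnR0 : (n:ℝ) ≠ 0 := Nat.cast_ne_zero.mpr (by omega)
  have hSrootsre : Sroots.re = ((n:ℝ)+1)/n * A := by
    rw [hmain, show ((n:ℂ)+1)/n = ((((n:ℝ)+1)/n : ℝ) : ℂ) by push_cast; ring,
      Complex.re_ofReal_mul]
    congr 1
    rw [hS2, Complex.re_sum, hAdef]
    apply Finset.sum_congr rfl
    intro j _
    rw [show ((nj j : ℂ)) = (((nj j : ℝ)):ℂ) by push_cast; ring, Complex.re_ofReal_mul]
  have hTsum : (T.map g).sum = Bv := by
    rw [hT, show (Multiset.map g (∑ j, (nj j - 1) • ({z j} : Multiset ℂ)))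
        = ∑ j, Multiset.map g ((nj j - 1) • ({z j} : Multiset ℂ)) from
      map_sum (Multiset.mapAddMonoidHom _) _ _, Multiset.sum_sum, hBdef]
    apply Finset.sum_congr rfl
    intro j _
    rw [Multiset.nsmul_singleton, Multiset.map_replicate, Multiset.sum_replicate,
      nsmul_eq_mul]
  have hmemroots : ∀ x ∈ R, x ∈ F.roots := by
    intro x hx
    rw [hR] at hx
    exact Multiset.mem_of_le tsub_le_self hx
  have hRsum : ((R.map g)).sum < k := by
    obtain ⟨a, t, hat⟩ : ∃ a t, R = a ::ₘ t := by
      have hne : R ≠ 0 := by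
        intro h0; rw [h0] at hcardR; simp at hcardR; omega
      obtain ⟨a, ha⟩ := Multiset.exists_mem_of_ne_zero hne
      obtain ⟨t, ht⟩ := Multiset.exists_cons_of_mem ha
      exact ⟨a, t, ht⟩
    have hbound : ∀ x ∈ (t.map g), x ≤ (1:ℝ) := by
      intro x hx
      obtain ⟨ζ, hζt, rfl⟩ := Multiset.mem_map.mp hx
      exact le_of_lt (hroot_lt ζ (hmemroots ζ (hat ▸ Multiset.mem_cons_of_mem hζt)))
    have h1 : (t.map g).sum ≤ (Multiset.card (t.map g)) • (1:ℝ) :=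
      Multiset.sum_le_card_nsmul _ _ hbound
    have h2 : g a < 1 := hroot_lt a (hmemroots a (hat ▸ Multiset.mem_cons_self a t))
    have hcard : Multiset.card t + 1 = k := by
      rw [hat] at hcardR; simp at hcardR; omega
    rw [hat]
    simp only [Multiset.map_cons, Multiset.sum_cons]
    rw [Multiset.card_map, nsmul_eq_mul] at h1
    have : ((Multiset.card t : ℝ)) + 1 = (k:ℝ) := by exact_mod_cast hcard
    linarith
  have hsplitsum : Sroots.re = (R.map g).sum + Bv := by
    rw [hSroots, hmap_sum_re, ← hRT, Multiset.map_add, Multiset.sum_add, hTsum]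
  -- the key lower bound
  have hkle : (k:ℝ) ≤ ((n:ℝ)+1)/n * A - Bv := by
    have heq : ((n:ℝ)+1)/n * A - Bv = ∑ j, (((nj j:ℝ)/n + 1)) * r j := by
      rw [hAdef, hBdef, Finset.mul_sum, ← Finset.sum_sub_distrib]
      apply Finset.sum_congr rfl
      intro j _
      rw [Nat.cast_sub (hnj j)]
      field_simp
      ring
    have hterm : ∀ j ∈ (Finset.univ : Finset (Fin k)),
        ((nj j:ℝ)/n + 1) * (1/2) ≤ ((nj j:ℝ)/n + 1) * r j := by
      intro j _
      apply mul_le_mul_of_nonneg_left (hrhalf j)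
      positivity
    have hlow : ∑ j, ((nj j:ℝ)/n + 1) * (1/2) ≤ ∑ j, ((nj j:ℝ)/n + 1) * r j :=
      Finset.sum_le_sum hterm
    have hsum2 : ∑ j, ((nj j:ℝ)/n + 1) * (1/2) = ((N:ℝ)/n + k) / 2 := by
      rw [← Finset.sum_mul, Finset.sum_add_distrib, ← Finset.sum_div]
      have : ∑ j, (nj j:ℝ) = (N:ℝ) := by rw [hN]; push_cast; rfl
      rw [this]
      simp
      ring
    have hNn : (k:ℝ) ≤ (N:ℝ)/n := by
      rw [le_div_iff₀ (by positivity : (0:ℝ) < n)]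
      exact_mod_cast hsum
    rw [heq]
    calc (k:ℝ) ≤ ((N:ℝ)/n + k)/2 := by linarith
    _ = ∑ j, ((nj j:ℝ)/n + 1) * (1/2) := hsum2.symm
    _ ≤ _ := hlow
  rw [hsplitsum] at hSrootsre
  linarith
end

section
/- Let p(z) = (z−a)^n ∏_{j=1}^k (z−z_j)^{n_j} with 0 < a ≤ 1, z_j ≠ a, z_j distinct, n ≥ 1, n_j ≥ 1, and m = n + ∑ n_j. Write p'(z) = q(z)(z−a)^{n−1} ∏_{j=1}^k (z−z_j)^{n_j−1} where q(z) = m ∏_{j=1}^k (z−w_j). If |z_j| ≤ 1 for all j, then |q(0)| ≤ a(m−n) + n, and hence there exists j ∈ {1,…,k} with |w_j| ≤ ((a(m−n)+n)/m)^{1/k}. -/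
theorem stmt9 (n k : ℕ) (hn : 1 ≤ n) (hk : 1 ≤ k)
    (a : ℝ) (ha : 0 < a) (ha1 : a ≤ 1)
    (z w : Fin k → ℂ) (nj : Fin k → ℕ) (hnj : ∀ j, 1 ≤ nj j)
    (hza : ∀ j, z j ≠ (a : ℂ)) (hzdist : Function.Injective z)
    (m : ℕ) (hm : m = n + ∑ j, nj j)
    (p q : ℂ → ℂ)
    (hp : p = fun x => (x - (a : ℂ)) ^ n * ∏ j, (x - z j) ^ nj j)
    (hq : q = fun x => (m : ℂ) * ∏ j, (x - w j))
    (hderiv : ∀ x : ℂ, deriv p x =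
      q x * (x - (a : ℂ)) ^ (n - 1) * ∏ j, (x - z j) ^ (nj j - 1))
    (hzle : ∀ j, ‖z j‖ ≤ 1) :
    ‖q 0‖ ≤ a * ((m : ℝ) - n) + n ∧
    ∃ j : Fin k, ‖w j‖ ≤
      ((a * ((m : ℝ) - n) + n) / m) ^ ((1 : ℝ) / k) := by
  classical
  have hkinh : Nonempty (Fin k) := ⟨⟨0, hk⟩⟩
  set Q : ℂ → ℂ := fun x => (n : ℂ) * ∏ j, (x - z j) +
      (x - (a : ℂ)) * ∑ j, (nj j : ℂ) * ∏ i ∈ Finset.univ.erase j, (x - z i) with hQdef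
  have e1 : ∀ (c : ℂ) (r : ℕ), 1 ≤ r → c ^ r = c ^ (r - 1) * c := by
    intro c r hr
    conv_lhs => rw [show r = (r - 1) + 1 by omega]
    rw [pow_succ]
  -- derivative formula
  have hD : ∀ x : ℂ, deriv p x =
      Q x * (x - (a : ℂ)) ^ (n - 1) * ∏ j, (x - z j) ^ (nj j - 1) := by
    intro x
    have h1 : HasDerivAt (fun x : ℂ => (x - (a : ℂ)) ^ n)
        ((n : ℂ) * (x - (a : ℂ)) ^ (n - 1)) x := by
      simpa using ((hasDerivAt_id x).sub_const ((a : ℂ))).fun_pow n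
    have h2 : ∀ j : Fin k, HasDerivAt (fun x : ℂ => (x - z j) ^ nj j)
        ((nj j : ℂ) * (x - z j) ^ (nj j - 1)) x := fun j => by
      simpa using ((hasDerivAt_id x).sub_const (z j)).fun_pow (nj j)
    have h3 : HasDerivAt (fun x : ℂ => ∏ j, (x - z j) ^ nj j)
        (∑ j, (∏ i ∈ Finset.univ.erase j, (x - z i) ^ nj i) •
          ((nj j : ℂ) * (x - z j) ^ (nj j - 1))) x :=
      HasDerivAt.fun_finsetProd (fun j _ => h2 j)
    have h4 := h1.fun_mul h3
    rw [hp]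
    rw [h4.deriv]
    -- algebraic identity
    have e2 : (∏ j, (x - z j) ^ nj j)
        = (∏ j, (x - z j) ^ (nj j - 1)) * ∏ j, (x - z j) := by
      rw [← Finset.prod_mul_distrib]
      exact Finset.prod_congr rfl fun j _ => e1 _ _ (hnj j)
    have e5 : (∑ j, (∏ i ∈ Finset.univ.erase j, (x - z i) ^ nj i) •
          ((nj j : ℂ) * (x - z j) ^ (nj j - 1)))
        = (∏ i, (x - z i) ^ (nj i - 1)) *
          ∑ j, (nj j : ℂ) * ∏ i ∈ Finset.univ.erase j, (x - z i) := by
      rw [Finset.mul_sum]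
      refine Finset.sum_congr rfl fun j _ => ?_
      have e3 : (∏ i ∈ Finset.univ.erase j, (x - z i) ^ nj i)
          = (∏ i ∈ Finset.univ.erase j, (x - z i) ^ (nj i - 1)) *
            ∏ i ∈ Finset.univ.erase j, (x - z i) := by
        rw [← Finset.prod_mul_distrib]
        exact Finset.prod_congr rfl fun i _ => e1 _ _ (hnj i)
      have e4 : (∏ i ∈ Finset.univ.erase j, (x - z i) ^ (nj i - 1)) *
          (x - z j) ^ (nj j - 1) = ∏ i, (x - z i) ^ (nj i - 1) :=
        Finset.prod_erase_mul _ _ (Finset.mem_univ j)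
      rw [smul_eq_mul, e3, ← e4]
      ring
    rw [e5, e2, e1 (x - (a : ℂ)) n hn, hQdef]
    ring
  -- q = Q off the finite bad set
  have hm0 : 0 < m := by omega
  have hqQ : q = Q := by
    have hbad : (({(a : ℂ)} ∪ Set.range z) : Set ℂ).Countable :=
      (Set.countable_singleton _).union (Set.finite_range z).countable
    have hdense : Dense (({(a : ℂ)} ∪ Set.range z)ᶜ : Set ℂ) :=
      hbad.dense_compl ℂ
    have hlin : ∀ c : ℂ, Continuous fun x : ℂ => x - c := fun c =>
      continuous_id.sub continuous_const
    have hcq : Continuous q := by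
      rw [hq]
      exact continuous_const.mul (continuous_finset_prod _ fun j _ => hlin (w j))
    have hcQ : Continuous Q := by
      rw [hQdef]
      exact (continuous_const.mul (continuous_finset_prod _ fun j _ => hlin (z j))).add
        ((hlin _).mul (continuous_finset_sum _ fun j _ => continuous_const.mul
            (continuous_finset_prod _ fun i _ => hlin (z i))))
    refine hcq.ext_on hdense hcQ ?_
    intro x hx
    simp only [Set.mem_compl_iff, Set.mem_union, Set.mem_singleton_iff,
      Set.mem_range, not_or, not_exists] at hx
    have hx1 : (x - (a : ℂ)) ^ (n - 1) ≠ 0 :=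
      pow_ne_zero _ (sub_ne_zero.2 hx.1)
    have hx2 : (∏ j, (x - z j) ^ (nj j - 1)) ≠ 0 :=
      Finset.prod_ne_zero_iff.2 fun j _ =>
        pow_ne_zero _ (sub_ne_zero.2 fun h => hx.2 j h.symm)
    have := (hderiv x).symm.trans (hD x)
    have h' : q x * ((x - (a : ℂ)) ^ (n - 1) * ∏ j, (x - z j) ^ (nj j - 1))
        = Q x * ((x - (a : ℂ)) ^ (n - 1) * ∏ j, (x - z j) ^ (nj j - 1)) := by
      rw [← mul_assoc, ← mul_assoc]; exact this
    exact mul_right_cancel₀ (mul_ne_zero hx1 hx2) h'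
  -- First bound
  have habs : ‖q 0‖ ≤ a * ((m : ℝ) - n) + n := by
    rw [hqQ, hQdef]
    simp only [zero_sub]
    calc ‖(n : ℂ) * ∏ j, -z j +
          (-(a : ℂ)) * ∑ j, (nj j : ℂ) * ∏ i ∈ Finset.univ.erase j, -z i‖
        ≤ ‖(n : ℂ) * ∏ j, -z j‖ +
          ‖(-(a : ℂ)) * ∑ j, (nj j : ℂ) * ∏ i ∈ Finset.univ.erase j, -z i‖ :=
        norm_add_le _ _
      _ ≤ n * 1 + a * ((m : ℝ) - n) := by
          apply add_le_add
          · rw [norm_mul, norm_prod]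
            simp only [Complex.norm_natCast, norm_neg]
            apply mul_le_mul_of_nonneg_left _ (by positivity)
            exact Finset.prod_le_one (fun j _ => norm_nonneg _) (fun j _ => hzle j)
          · rw [norm_mul, norm_neg, Complex.norm_real, Real.norm_eq_abs, abs_of_pos ha]
            apply mul_le_mul_of_nonneg_left _ ha.le
            calc ‖∑ j, (nj j : ℂ) * ∏ i ∈ Finset.univ.erase j, -z i‖
                ≤ ∑ j, ‖(nj j : ℂ) * ∏ i ∈ Finset.univ.erase j, -z i‖ :=
                norm_sum_le _ _
              _ ≤ ∑ j : Fin k, (nj j : ℝ) := by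
                  apply Finset.sum_le_sum
                  intro j _
                  rw [norm_mul, norm_prod]
                  simp only [Complex.norm_natCast, norm_neg]
                  calc (nj j : ℝ) * ∏ i ∈ Finset.univ.erase j, ‖z i‖
                      ≤ (nj j : ℝ) * 1 := by
                        apply mul_le_mul_of_nonneg_left _ (by positivity)
                        exact Finset.prod_le_one (fun i _ => norm_nonneg _)
                          (fun i _ => hzle i)
                    _ = (nj j : ℝ) := mul_one _
              _ = (m : ℝ) - n := by
                  rw [hm]; push_cast; ring
      _ = a * ((m : ℝ) - n) + n := by ring
  refine ⟨habs, ?_⟩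
  -- second part
  set C : ℝ := (a * ((m : ℝ) - n) + n) / m with hC
  have hmn : (n : ℝ) ≤ (m : ℝ) := by
    have : n ≤ m := by omega
    exact_mod_cast this
  have hC0 : 0 < C := by
    apply div_pos _ (by exact_mod_cast hm0)
    have h1 : 0 ≤ a * ((m : ℝ) - n) := mul_nonneg ha.le (by linarith)
    have h2 : (0 : ℝ) < n := by exact_mod_cast hn
    linarith
  have hprod : (∏ j, ‖w j‖) ≤ C := by
    have : ‖q 0‖ = (m : ℝ) * ∏ j, ‖w j‖ := by
      rw [hq]
      simp only [norm_mul, norm_prod, zero_sub, norm_neg, Complex.norm_natCast]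
    rw [this] at habs
    rw [hC, le_div_iff₀ (by exact_mod_cast hm0)]
    linarith [habs]
  by_contra hcon
  push_neg at hcon
  have hb0 : 0 < C ^ ((1 : ℝ) / k) := Real.rpow_pos_of_pos hC0 _
  have hlt : (∏ _j : Fin k, C ^ ((1 : ℝ) / k)) < ∏ j, ‖w j‖ :=
    Finset.prod_lt_prod_of_nonempty (fun j _ => hb0) (fun j _ => hcon j)
      Finset.univ_nonempty
  have heq : (∏ _j : Fin k, C ^ ((1 : ℝ) / k)) = C := by
    rw [Finset.prod_const, Finset.card_univ, Fintype.card_fin,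
      ← Real.rpow_natCast (C ^ ((1 : ℝ) / k)) k, ← Real.rpow_mul hC0.le]
    rw [one_div, inv_mul_cancel₀ (Nat.cast_ne_zero.mpr (by omega) : (k : ℝ) ≠ 0),
      Real.rpow_one]
  rw [heq] at hlt
  linarith
end

section
/- Let p(z) = (z−a)^n ∏_{j=1}^k (z−z_j)^{n_j} with n ≥ 1, k ≥ 1, n_j ≥ 1, |z_j| ≤ 1, z_j ≠ a, z_j distinct, and m = n + ∑ n_j. Let a_0 ∈ (0,1) be the unique zero of φ(a) = (1−a)^k − (a(m−n)+n)/m. If 0 < a ≤ a_0, then there exists ζ ≠ a with p'(ζ) = 0 and |a − ζ| ≤ 1. -/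
open Polynomial Finset

lemma multiset_prod_gt_one {s : Multiset ℝ} (hs : s ≠ 0) (h : ∀ x ∈ s, 1 < x) :
    1 < s.prod := by
  induction s using Multiset.induction with
  | empty => simp at hs
  | cons y t ih =>
    rw [Multiset.prod_cons]
    have hy : 1 < y := h y (Multiset.mem_cons_self y t)
    rcases eq_or_ne t 0 with rfl | ht
    · simpa using hy
    · have := ih ht (fun x hx => h x (Multiset.mem_cons_of_mem hx))
      nlinarith

theorem stmt10 (n k : ℕ) (hn : 1 ≤ n) (hk : 1 ≤ k)
    (z : Fin k → ℂ) (nj : Fin k → ℕ) (hnj : ∀ j, 1 ≤ nj j)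
    (hzle : ∀ j, ‖z j‖ ≤ 1)
    (a : ℝ)
    (hza : ∀ j, z j ≠ (a : ℂ)) (hzdist : Function.Injective z)
    (m : ℕ) (hm : m = n + ∑ j, nj j)
    (φ : ℝ → ℝ)
    (hφ : φ = fun x => (1 - x) ^ k - (x * ((m : ℝ) - n) + n) / m)
    (a₀ : ℝ) (ha₀ : a₀ ∈ Set.Ioo (0 : ℝ) 1) (hφa₀ : φ a₀ = 0)
    (ha₀uniq : ∀ a' ∈ Set.Ioo (0 : ℝ) 1, φ a' = 0 → a' = a₀)
    (ha : 0 < a) (haa₀ : a ≤ a₀)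
    (p : ℂ → ℂ)
    (hp : p = fun x => (x - (a : ℂ)) ^ n * ∏ j, (x - z j) ^ nj j) :
    ∃ ζ : ℂ, ζ ≠ (a : ℂ) ∧ deriv p ζ = 0 ∧ ‖(a : ℂ) - ζ‖ ≤ 1 := by
  classical
  obtain ⟨ha₀0, ha₀1⟩ := ha₀
  have ha1 : a < 1 := lt_of_le_of_lt haa₀ ha₀1
  -- m basics
  have hkm : k ≤ ∑ j, nj j := by
    calc k = ∑ _j : Fin k, 1 := by simp
    _ ≤ ∑ j, nj j := Finset.sum_le_sum fun j _ => hnj j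
  have hnm : n < m := by omega
  have hm0 : 0 < m := by omega
  have hmC : (m : ℂ) ≠ 0 := by exact_mod_cast hm0.ne'
  -- the auxiliary polynomial Q
  set A : ℂ[X] := ∏ j, (X - C (z j)) with hA
  set S : ℂ[X] := ∑ j, C (nj j : ℂ) * ∏ i ∈ univ.erase j, (X - C (z i)) with hS
  set Q : ℂ[X] := C (n : ℂ) * A + (X - C (a : ℂ)) * S with hQ
  have hAmonic : A.Monic := monic_prod_of_monic _ _ fun j _ => monic_X_sub_C _
  have hAdeg : A.natDegree = k := by
    rw [hA, natDegree_prod_of_monic _ _ fun j _ => monic_X_sub_C _]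
    simp
  have hErasemonic : ∀ j : Fin k, (∏ i ∈ univ.erase j, (X - C (z i))).Monic :=
    fun j => monic_prod_of_monic _ _ fun i _ => monic_X_sub_C _
  have hErasedeg : ∀ j : Fin k, (∏ i ∈ univ.erase j, (X - C (z i))).natDegree = k - 1 := by
    intro j
    rw [natDegree_prod_of_monic _ _ fun i _ => monic_X_sub_C _]
    simp [Finset.card_erase_of_mem]
  have hSdeg : S.natDegree ≤ k - 1 := by
    refine natDegree_sum_le_of_forall_le _ _ fun j _ => ?_
    exact le_trans (natDegree_C_mul_le _ _) (le_of_eq (hErasedeg j))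
  -- coefficient of Q at k is m
  have hScoeffk : S.coeff k = 0 :=
    coeff_eq_zero_of_natDegree_lt (lt_of_le_of_lt hSdeg (by omega))
  have hScoeffk1 : S.coeff (k - 1) = (∑ j, (nj j : ℂ)) := by
    rw [hS, finset_sum_coeff]
    refine Finset.sum_congr rfl fun j _ => ?_
    rw [coeff_C_mul, ← hErasedeg j, Monic.coeff_natDegree (hErasemonic j), mul_one]
  have hAcoeff : A.coeff k = 1 := by rw [← hAdeg]; exact hAmonic.coeff_natDegree
  have hQcoeff : Q.coeff k = (m : ℂ) := by
    have hk1 : k - 1 + 1 = k := by omega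
    rw [hQ, coeff_add, coeff_C_mul, hAcoeff, sub_mul,
      coeff_sub, ← hk1, coeff_X_mul, hk1, coeff_C_mul, hScoeffk, hScoeffk1, hm]
    push_cast
    ring
  have hQne : Q ≠ 0 := fun h => hmC (by rw [← hQcoeff, h, coeff_zero])
  have hQdegle : Q.natDegree ≤ k := by
    refine le_trans (natDegree_add_le _ _) (max_le ?_ ?_)
    · exact le_trans (natDegree_C_mul_le _ _) (le_of_eq hAdeg)
    · refine le_trans (natDegree_mul_le) ?_
      have : (X - C (a : ℂ)).natDegree = 1 := natDegree_X_sub_C _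
      omega
  have hQdeg : Q.natDegree = k :=
    le_antisymm hQdegle (le_natDegree_of_ne_zero (hQcoeff ▸ hmC))
  have hQlead : Q.leadingCoeff = (m : ℂ) := by
    rw [leadingCoeff, hQdeg, hQcoeff]
  -- roots of Q
  have hcard : Q.roots.card = k := by
    rw [← hQdeg]
    exact splits_iff_card_roots.mp (IsAlgClosed.splits Q)
  have hQeqProd := C_leadingCoeff_mul_prod_multiset_X_sub_C (p := Q) (hQdeg ▸ hcard)
  -- evaluation of Q at any point
  have hQeval : ∀ w : ℂ, Q.eval w =
      (n : ℂ) * ∏ j, (w - z j) + (w - (a : ℂ)) * ∑ j, (nj j : ℂ) * ∏ i ∈ univ.erase j, (w - z i) := by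
    intro w
    simp [hQ, hA, hS, eval_prod, eval_finset_sum]
  -- Q(a) = n * ∏ (a - z j)
  have hQa : Q.eval (a : ℂ) = (n : ℂ) * ∏ j, ((a : ℂ) - z j) := by
    rw [hQeval]; ring
  have hQa_ne : Q.eval (a : ℂ) ≠ 0 := by
    rw [hQa]
    refine mul_ne_zero (by exact_mod_cast (by omega : n ≠ 0)) ?_
    exact Finset.prod_ne_zero_iff.mpr fun j _ => sub_ne_zero.mpr (Ne.symm (hza j))
  -- product over roots
  have hprodroots : (Q.roots.map (fun w => (a : ℂ) - w)).prod =
      ((n : ℂ) / m) * ∏ j, ((a : ℂ) - z j) := by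
    have h1 : Q.eval (a : ℂ) = (m : ℂ) * (Q.roots.map (fun w => (a : ℂ) - w)).prod := by
      conv_lhs => rw [← hQeqProd]
      rw [hQlead, eval_mul, eval_C, eval_multiset_prod, Multiset.map_map]
      congr 2
      apply Multiset.map_congr rfl
      intro w _
      simp
    have h2 : (m : ℂ) * (Q.roots.map (fun w => (a : ℂ) - w)).prod =
        (n : ℂ) * ∏ j, ((a : ℂ) - z j) := by rw [← h1, ← hQa]
    field_simp
    linear_combination h2
  -- bound on |∏ (a - z j)|
  have habs_prod : ‖∏ j, ((a : ℂ) - z j)‖ ≤ (1 + a) ^ k := by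
    rw [norm_prod]
    calc ∏ j, ‖(a : ℂ) - z j‖ ≤ ∏ _j : Fin k, (1 + a) := by
          refine Finset.prod_le_prod (fun j _ => norm_nonneg _) fun j _ => ?_
          calc ‖(a : ℂ) - z j‖ ≤ ‖(a : ℂ)‖ + ‖z j‖ :=
                norm_sub_le _ _
          _ ≤ a + 1 := by
                rw [Complex.norm_real, Real.norm_of_nonneg ha.le]
                linarith [hzle j]
          _ = 1 + a := by ring
      _ = (1 + a) ^ k := by simp
  -- the key real inequality : (n/m) * (1+a)^k ≤ 1
  have hnm_le : (n : ℝ) / m ≤ (1 - a) ^ k := by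
    have h0 : (1 - a₀) ^ k = (a₀ * ((m : ℝ) - n) + n) / m := by
      have := hφa₀
      rw [hφ] at this
      simpa using by linarith [this]
    have h1 : (n : ℝ) / m ≤ (a₀ * ((m : ℝ) - n) + n) / m := by
      apply div_le_div_of_nonneg_right ?_ (by positivity)
      nlinarith [ha₀0, (by exact_mod_cast hnm.le : (n:ℝ) ≤ m)]
    calc (n : ℝ) / m ≤ (1 - a₀) ^ k := h0 ▸ h1
      _ ≤ (1 - a) ^ k := pow_le_pow_left₀ (by linarith) (by linarith) k
  have hkey : (n : ℝ) / m * (1 + a) ^ k ≤ 1 := by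
    calc (n : ℝ) / m * (1 + a) ^ k ≤ (1 - a) ^ k * (1 + a) ^ k := by
          apply mul_le_mul_of_nonneg_right hnm_le (by positivity)
      _ = ((1 - a) * (1 + a)) ^ k := (mul_pow _ _ _).symm
      _ = (1 - a ^ 2) ^ k := by ring_nf
      _ ≤ 1 := pow_le_one₀ (by nlinarith [mul_nonneg (by linarith : (0:ℝ) ≤ 1 - a) (by linarith : (0:ℝ) ≤ 1 + a)]) (by nlinarith [sq_nonneg a])
  -- |product over roots| ≤ 1
  have habs_le : (Q.roots.map (fun w => ‖(a : ℂ) - w‖)).prod ≤ 1 := by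
    have : (Q.roots.map (fun w => ‖(a : ℂ) - w‖)).prod =
        ‖(Q.roots.map (fun w => (a : ℂ) - w)).prod‖ := by
      exact Multiset.prod_hom' Q.roots (normHom : ℂ →*₀ ℝ) (fun w => (a : ℂ) - w)
    rw [this, hprodroots, norm_mul, norm_div]
    simp only [Complex.norm_natCast]
    calc (n : ℝ) / m * ‖∏ j, ((a : ℂ) - z j)‖ ≤ (n : ℝ) / m * (1 + a) ^ k := by
          apply mul_le_mul_of_nonneg_left habs_prod (by positivity)
      _ ≤ 1 := hkey
  -- there exists a root w with |a - w| ≤ 1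
  have hroot_ex : ∃ w ∈ Q.roots, ‖(a : ℂ) - w‖ ≤ 1 := by
    by_contra hcon
    push_neg at hcon
    have hne : Q.roots.map (fun w => ‖(a : ℂ) - w‖) ≠ 0 := by
      intro h
      have := congrArg Multiset.card h
      rw [Multiset.card_map, hcard] at this
      simp at this; omega
    have := multiset_prod_gt_one hne (by
      intro x hx
      obtain ⟨w, hw, rfl⟩ := Multiset.mem_map.mp hx
      exact hcon w hw)
    linarith
  obtain ⟨w, hwmem, hwle⟩ := hroot_ex
  have hQw : Q.eval w = 0 := (mem_roots hQne).mp hwmem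
  have hwa : w ≠ (a : ℂ) := fun h => hQa_ne (h ▸ hQw)
  -- the derivative of p at w
  have hQw' : (n : ℂ) * ∏ j, (w - z j)
      + (w - (a : ℂ)) * ∑ j, (nj j : ℂ) * ∏ i ∈ univ.erase j, (w - z i) = 0 := by
    rw [← hQeval w]; exact hQw
  have hd1 : HasDerivAt (fun x : ℂ => (x - (a : ℂ)) ^ n)
      ((n : ℂ) * (w - (a : ℂ)) ^ (n - 1) * 1) w :=
    ((hasDerivAt_id w).sub_const _).pow n
  have hdg : HasDerivAt (fun x : ℂ => ∏ j, (x - z j) ^ nj j)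
      (∑ j, (∏ i ∈ univ.erase j, (w - z i) ^ nj i) •
        ((nj j : ℂ) * (w - z j) ^ (nj j - 1) * 1)) w :=
    HasDerivAt.fun_finsetProd (fun j _ => ((hasDerivAt_id w).sub_const _).pow (nj j))
  have hdp : HasDerivAt p
      ((n : ℂ) * (w - (a : ℂ)) ^ (n - 1) * 1 * ∏ j, (w - z j) ^ nj j
        + (w - (a : ℂ)) ^ n * ∑ j, (∏ i ∈ univ.erase j, (w - z i) ^ nj i) •
          ((nj j : ℂ) * (w - z j) ^ (nj j - 1) * 1)) w := by
    rw [hp]; exact hd1.mul hdg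
  have key : ∀ j : Fin k, (∏ i ∈ univ.erase j, (w - z i) ^ nj i) * (w - z j) ^ (nj j - 1)
      = (∏ i, (w - z i) ^ (nj i - 1)) * ∏ i ∈ univ.erase j, (w - z i) := by
    intro j
    have step : ∏ i ∈ univ.erase j, ((w - z i) ^ (nj i - 1) * (w - z i))
        = ∏ i ∈ univ.erase j, (w - z i) ^ nj i :=
      Finset.prod_congr rfl fun i _ => by rw [← pow_succ, Nat.sub_add_cancel (hnj i)]
    rw [← Finset.mul_prod_erase univ (fun i => (w - z i) ^ (nj i - 1)) (Finset.mem_univ j),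
      mul_assoc, ← Finset.prod_mul_distrib, step]
    ring
  have hprodsplit : ∏ j, (w - z j) ^ nj j
      = (∏ j, (w - z j) ^ (nj j - 1)) * ∏ j, (w - z j) := by
    rw [← Finset.prod_mul_distrib]
    exact Finset.prod_congr rfl fun j _ => by rw [← pow_succ, Nat.sub_add_cancel (hnj j)]
  have hupow : (w - (a : ℂ)) ^ n = (w - (a : ℂ)) ^ (n - 1) * (w - (a : ℂ)) := by
    rw [← pow_succ, Nat.sub_add_cancel hn]
  have hsum : ∑ j, (∏ i ∈ univ.erase j, (w - z i) ^ nj i) •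
        ((nj j : ℂ) * (w - z j) ^ (nj j - 1) * 1)
      = (∏ i, (w - z i) ^ (nj i - 1)) * ∑ j, (nj j : ℂ) * ∏ i ∈ univ.erase j, (w - z i) := by
    rw [Finset.mul_sum]
    refine Finset.sum_congr rfl fun j _ => ?_
    rw [smul_eq_mul]
    linear_combination (nj j : ℂ) * key j
  have hD0 : (n : ℂ) * (w - (a : ℂ)) ^ (n - 1) * 1 * ∏ j, (w - z j) ^ nj j
      + (w - (a : ℂ)) ^ n * ∑ j, (∏ i ∈ univ.erase j, (w - z i) ^ nj i) •
        ((nj j : ℂ) * (w - z j) ^ (nj j - 1) * 1) = 0 := by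
    rw [hprodsplit, hupow, hsum]
    calc (n : ℂ) * (w - (a : ℂ)) ^ (n - 1) * 1
          * ((∏ j, (w - z j) ^ (nj j - 1)) * ∏ j, (w - z j))
        + (w - (a : ℂ)) ^ (n - 1) * (w - (a : ℂ))
          * ((∏ i, (w - z i) ^ (nj i - 1)) * ∑ j, (nj j : ℂ) * ∏ i ∈ univ.erase j, (w - z i))
        = (w - (a : ℂ)) ^ (n - 1) * (∏ j, (w - z j) ^ (nj j - 1))
          * ((n : ℂ) * ∏ j, (w - z j)
            + (w - (a : ℂ)) * ∑ j, (nj j : ℂ) * ∏ i ∈ univ.erase j, (w - z i)) := by ring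
      _ = 0 := by rw [hQw']; ring
  exact ⟨w, hwa, by rw [hdp.deriv, hD0], hwle⟩
end
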